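/- Work in ℝᵐ with the Euclidean norm. Let Ψ, ψ : ℝᵐ → ℝ be convex and differentiable with ∇Ψ Lipschitz of constant L_F and ∇ψ Lipschitz of constant L_f. Let Y ⊆ ℝᵐ be nonempty, compact and convex, s_u ∈ (0, 1/L_F), s_l ∈ (0, 1/L_f), μ ∈ (0,1). Let α_k ∈ (0,1] be nonincreasing with α_k → 0 and ∑_k α_k = +∞, and β_k ∈ [β̲, 1] for some β̲ > 0. Starting from y₀ ∈ Y, define y_{k+1} = Proj_Y( y_k − ( μ α_k s_u ∇Ψ(y_k) + (1−μ) β_k s_l ∇ψ(y_k) ) ). Let S = argmin_{ℝᵐ} ψ, Ψ* = inf_{y ∈ Y ∩ S} Ψ(y), and Ŝ = { y ∈ Y ∩ S : Ψ(y) = Ψ* }. If Ŝ is nonempty, then dist(y_k, Ŝ) → 0 and Ψ(y_k) → Ψ* as k → ∞. -/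

import Mathlib

/-!
Fix `p ∈ Ŝ`. Nonexpansiveness of the projection, convexity of `Ψ` and `ψ`, convexity of `‖·‖²`
and the bound `‖∇ψ‖² ≤ 2 L_f (ψ - min ψ)` give the Lyapunov inequality
`dist(y_{k+1}, Ŝ)² ≤ dist(y_k, Ŝ)² - 2 μ s_u α_k (Ψ(y_k) - Ψ*) - c (ψ(y_k) - min ψ) + K α_k²`
with `c > 0`. By compactness, a point of `Y` at distance `≥ r` from `Ŝ` has `Ψ - Ψ*` or
`ψ - min ψ` at least `δ(r) > 0`, so once `α_k` is small the distance drops by a fixed multiple of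
`α_k` while it is `≥ r`. As `∑ α_k = ∞` it eventually falls below `r`, and as `α_k → 0` it can
then never climb far above `r` again. Finally `Ψ` is Lipschitz on `Y`, so `Ψ(y_k) → Ψ*`.
-/

open Filter Topology Set Metric
open scoped RealInnerProductSpace

theorem tendsto_zero_of_drift_of_descent {D α : ℕ → ℝ} {C : ℝ} (hD : ∀ k, 0 ≤ D k)
    (hα : ∀ k, 0 ≤ α k) (hαto : Tendsto α atTop (𝓝 0))
    (hαdiv : Tendsto (fun n => ∑ k ∈ Finset.range n, α k) atTop atTop)
    (hdrift : ∀ k, D (k + 1) ≤ D k + C * α k)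
    (hdesc : ∀ ε > 0, ∃ ρ > 0, ∀ᶠ k in atTop, ε ≤ D k → D (k + 1) ≤ D k - ρ * α k) :
    Tendsto D atTop (𝓝 0) := by
  refine tendsto_order.2 ⟨fun e he => Eventually.of_forall fun k => he.trans_le (hD k),
    fun ε hε => ?_⟩
  obtain ⟨ρ, hρ, hdescε⟩ := hdesc (ε / 2) (half_pos hε)
  have hCα : ∀ᶠ k in atTop, C * α k < ε / 2 :=
    (by simpa using hαto.const_mul C : Tendsto (C * α ·) atTop (𝓝 0)).eventually_lt_const
      (half_pos hε)
  obtain ⟨N, hN⟩ := eventually_atTop.1 (hdescε.and hCα)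
  have hvisit : ∃ k₁ ≥ N, D k₁ < ε / 2 := by
    by_contra! hfar
    -- Staying above `ε / 2` would make `D` decrease by `ρ` times a divergent sum.
    have hsum : ∀ n ≥ N, D n + ρ * ∑ i ∈ Finset.Ico N n, α i ≤ D N := by
      intro n hn
      induction n, hn using Nat.le_induction with
      | base => simp
      | succ n hn ih =>
        rw [Finset.sum_Ico_succ_top hn, mul_add]
        linarith [(hN n hn).1 (hfar n hn)]
    obtain ⟨n, hn, hbig⟩ := ((eventually_ge_atTop N).and
      (hαdiv.eventually_gt_atTop (∑ i ∈ Finset.range N, α i + D N / ρ))).exists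
    rw [← Finset.sum_range_add_sum_Ico _ hn] at hbig
    have hρD : ρ * (D N / ρ) = D N := mul_div_cancel₀ _ hρ.ne'
    nlinarith [hsum n hn, hD n]
  obtain ⟨k₁, hk₁N, hk₁⟩ := hvisit
  filter_upwards [eventually_ge_atTop k₁] with k hk
  induction k, hk using Nat.le_induction with
  | base => linarith
  | succ k hk ih =>
    have hNk := hN k (hk₁N.trans hk)
    rcases lt_or_ge (D k) (ε / 2) with hsmall | hlarge
    · linarith [hdrift k]
    · nlinarith [hNk.1 hlarge, hα k]

theorem tendsto_zero_of_lyapunov {D α P Q : ℕ → ℝ} {a c K B : ℝ} (ha : 0 < a) (hc : 0 < c)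
    (hK : 0 ≤ K) (hD : ∀ k, 0 ≤ D k) (hα : ∀ k, α k ∈ Ioc (0 : ℝ) 1)
    (hαto : Tendsto α atTop (𝓝 0))
    (hαdiv : Tendsto (fun n => ∑ k ∈ Finset.range n, α k) atTop atTop)
    (hP : ∀ k, -B ≤ P k) (hQ : ∀ k, 0 ≤ Q k)
    (hrec : ∀ k, D (k + 1) ≤ D k - a * α k * P k - c * Q k + K * α k ^ 2)
    (hgap : ∀ r > 0, ∃ δ > 0, ∀ k, r ≤ D k → δ ≤ max (P k) (Q k)) :
    Tendsto D atTop (𝓝 0) := by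
  have haα : ∀ k, 0 ≤ a * α k := fun k => mul_nonneg ha.le (hα k).1.le
  have hKα2 : ∀ k, K * α k ^ 2 ≤ K * α k := fun k => by
    obtain ⟨h0, h1⟩ := hα k
    exact mul_le_mul_of_nonneg_left (by nlinarith) hK
  have hdrift : ∀ k, D (k + 1) ≤ D k + (a * B + K) * α k := fun k => by
    nlinarith [hrec k, mul_le_mul_of_nonneg_left (hP k) (haα k), mul_nonneg hc.le (hQ k), hKα2 k]
  refine tendsto_zero_of_drift_of_descent hD (fun k => (hα k).1.le) hαto hαdiv hdrift
    fun ε hε => ?_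
  obtain ⟨δ, hδ, hgapε⟩ := hgap ε hε
  have hsmall : ∀ C : ℝ, ∀ η > 0, ∀ᶠ k in atTop, C * α k < η := fun C η hη =>
    (by simpa using hαto.const_mul C : Tendsto (C * α ·) atTop (𝓝 0)).eventually_lt_const hη
  refine ⟨min (a * δ / 2) (c * δ / 2), by positivity, ?_⟩
  filter_upwards [hsmall K (a * δ / 2) (by positivity),
    hsmall (a * B + K) (c * δ / 2) (by positivity)] with k hKα hCα hεD
  obtain ⟨hα0, hα1⟩ := hα k
  rcases le_max_iff.1 (hgapε k hεD) with hPδ | hQδ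
  · -- A definite gap in `P` beats the `α²` error once `α` is small.
    have hKα' : K * α k ^ 2 ≤ a * δ / 2 * α k := by
      rw [sq, ← mul_assoc]; exact mul_le_mul_of_nonneg_right hKα.le hα0.le
    nlinarith [hrec k, mul_le_mul_of_nonneg_left hPδ (haα k), mul_nonneg hc.le (hQ k),
      mul_le_mul_of_nonneg_right (min_le_left (a * δ / 2) (c * δ / 2)) hα0.le]
  · -- A definite gap in `Q` is a decrease of order one, not of order `α`.
    have hρα := mul_le_mul_of_nonneg_right (min_le_right (a * δ / 2) (c * δ / 2)) hα0.le
    have hcδα : c * δ / 2 * α k ≤ c * δ / 2 := mul_le_of_le_one_right (by positivity) hα1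
    nlinarith [hrec k, mul_le_mul_of_nonneg_left (hP k) (haα k),
      mul_le_mul_of_nonneg_left hQδ hc.le, hKα2 k]

theorem IsCompact.exists_pos_le_of_le {X : Type*} [TopologicalSpace X] {K : Set X}
    (hK : IsCompact K) {F G : X → ℝ} (hF : Continuous F) (hG : Continuous G)
    (hFG : ∀ w ∈ K, F w ≤ 0 → G w ≤ 0) {r : ℝ} (hr : 0 < r) :
    ∃ δ > 0, ∀ w ∈ K, r ≤ G w → δ ≤ F w := by
  rcases (K ∩ G ⁻¹' Ici r).eq_empty_or_nonempty with hempty | hne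
  · refine ⟨1, one_pos, fun w hw hrw => ?_⟩
    exact absurd (show w ∈ K ∩ G ⁻¹' Ici r from ⟨hw, hrw⟩) (hempty ▸ notMem_empty w)
  · obtain ⟨w₀, ⟨hw₀K, hw₀r⟩, hmin⟩ :=
      (hK.inter_right (isClosed_Ici.preimage hG)).exists_isMinOn hne hF.continuousOn
    refine ⟨F w₀, ?_, fun w hw hrw => hmin ⟨hw, hrw⟩⟩
    by_contra! h
    linarith [hFG w₀ hw₀K h, show r ≤ G w₀ from hw₀r]

section InnerProductSpace

variable {E : Type*} [NormedAddCommGroup E] [InnerProductSpace ℝ E]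

theorem norm_smul_add_one_sub_smul_sq_le {μ : ℝ} (hμ : μ ∈ Icc (0 : ℝ) 1) (u v : E) :
    ‖μ • u + (1 - μ) • v‖ ^ 2 ≤ μ * ‖u‖ ^ 2 + (1 - μ) * ‖v‖ ^ 2 := by
  obtain ⟨hμ0, hμ1⟩ := hμ
  have h1μ : 0 ≤ 1 - μ := sub_nonneg.2 hμ1
  have htri := norm_add_le (μ • u) ((1 - μ) • v)
  rw [norm_smul, norm_smul, Real.norm_of_nonneg hμ0, Real.norm_of_nonneg h1μ] at htri
  calc ‖μ • u + (1 - μ) • v‖ ^ 2 ≤ (μ * ‖u‖ + (1 - μ) * ‖v‖) ^ 2 :=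
        pow_le_pow_left₀ (norm_nonneg _) htri 2
    _ ≤ μ * ‖u‖ ^ 2 + (1 - μ) * ‖v‖ ^ 2 := by
        nlinarith [mul_nonneg (mul_nonneg hμ0 h1μ) (sq_nonneg (‖u‖ - ‖v‖))]

variable {Y : Set E} {proj : E → E}

theorem norm_proj_sub_le (hYconv : Convex ℝ Y) (hprojY : ∀ z, proj z ∈ Y)
    (hprojnear : ∀ z, ∀ w ∈ Y, ‖z - proj z‖ ≤ ‖z - w‖) (z : E) {w : E} (hw : w ∈ Y) :
    ‖proj z - w‖ ≤ ‖z - w‖ := by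
  have : Nonempty Y := ⟨⟨w, hw⟩⟩
  have hinf : ‖z - proj z‖ = ⨅ v : Y, ‖z - v‖ :=
    le_antisymm (le_ciInf fun v => hprojnear z v v.2)
      (ciInf_le (f := fun v : Y => ‖z - (v : E)‖) ⟨0, forall_mem_range.2 fun _ => norm_nonneg _⟩
        ⟨proj z, hprojY z⟩)
  have hvar := (norm_eq_iInf_iff_real_inner_le_zero hYconv (hprojY z)).1 hinf w hw
  have hexp : ‖z - w‖ ^ 2 = ‖z - proj z‖ ^ 2 - 2 * ⟪z - proj z, w - proj z⟫ + ‖proj z - w‖ ^ 2 := by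
    rw [show z - w = (z - proj z) - (w - proj z) by abel, norm_sub_sq_real, ← norm_neg (w - proj z),
      neg_sub]
  refine (sq_le_sq₀ (norm_nonneg _) (norm_nonneg _)).1 ?_
  nlinarith [sq_nonneg ‖z - proj z‖]

variable [CompleteSpace E] {f g : E → ℝ} {f' g' : E → E}

theorem hasDerivAt_comp_add_smul {a d v : E} {t : ℝ} (hf : HasGradientAt f v (a + t • d)) :
    HasDerivAt (fun s : ℝ => f (a + s • d)) ⟪v, d⟫ t := by
  have hline : HasDerivAt (fun s : ℝ => a + s • d) d t := by
    simpa using ((hasDerivAt_id t).smul_const d).const_add a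
  have h := (hasGradientAt_iff_hasFDerivAt.1 hf).comp_hasDerivAt t hline
  simp only [InnerProductSpace.toDual_apply_apply] at h
  exact h

theorem ConvexOn.add_inner_gradient_le (hconv : ConvexOn ℝ univ f)
    (hf : ∀ w, HasGradientAt f (f' w) w) (a b : E) : f a + ⟪f' a, b - a⟫ ≤ f b := by
  have hline : ConvexOn ℝ univ (fun s : ℝ => f (a + s • (b - a))) := by
    have hfun : f ∘ AffineMap.lineMap a b = fun s : ℝ => f (a + s • (b - a)) := by
      funext s; simp [AffineMap.lineMap_apply_module', add_comm]
    simpa [hfun] using hconv.comp_affineMap (AffineMap.lineMap a b)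
  have hslope := hline.le_slope_of_hasDerivAt (mem_univ 0) (mem_univ 1) one_pos
    (by simpa using hasDerivAt_comp_add_smul (hf (a + (0 : ℝ) • (b - a))))
  simp only [slope_def_field, one_smul, add_sub_cancel, zero_smul, add_zero, sub_zero,
    div_one] at hslope
  linarith

theorem le_add_inner_gradient_add_sq {L : ℝ} (hf : ∀ w, HasGradientAt f (f' w) w)
    (hlip : ∀ a b, ‖f' a - f' b‖ ≤ L * ‖a - b‖) (a b : E) :
    f b ≤ f a + ⟪f' a, b - a⟫ + L / 2 * ‖b - a‖ ^ 2 := by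
  set d := b - a
  let φ : ℝ → ℝ := fun t => f (a + t • d) - t * ⟪f' a, d⟫ - L / 2 * t ^ 2 * ‖d‖ ^ 2
  have hφ : ∀ t, HasDerivAt φ (⟪f' (a + t • d), d⟫ - ⟪f' a, d⟫ - L * t * ‖d‖ ^ 2) t := by
    intro t
    refine (((hasDerivAt_comp_add_smul (hf (a + t • d))).sub
      ((hasDerivAt_id t).mul_const ⟪f' a, d⟫)).sub
      (((hasDerivAt_pow 2 t).const_mul (L / 2)).mul_const (‖d‖ ^ 2))).congr_deriv ?_
    simp only [Nat.cast_ofNat, one_mul, Nat.add_one_sub_one, pow_one]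
    ring
  have hanti : AntitoneOn φ (Ici 0) := by
    refine antitoneOn_of_hasDerivWithinAt_nonpos (convex_Ici 0)
      (fun t _ => (hφ t).continuousAt.continuousWithinAt) (fun t _ => (hφ t).hasDerivWithinAt)
      fun t ht => ?_
    rw [interior_Ici, mem_Ioi] at ht
    have hgrad : ‖f' (a + t • d) - f' a‖ ≤ L * t * ‖d‖ := by
      simpa [norm_smul, abs_of_pos ht, mul_assoc] using hlip (a + t • d) a
    have hinner := real_inner_le_norm (f' (a + t • d) - f' a) d
    rw [inner_sub_left] at hinner
    nlinarith [mul_le_mul_of_nonneg_right hgrad (norm_nonneg d)]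
  have hφ10 := hanti (mem_Ici.2 le_rfl) (mem_Ici.2 zero_le_one) zero_le_one
  simp only [φ, d, one_smul, add_sub_cancel, zero_smul, add_zero, one_pow, one_mul, mul_one,
    zero_mul, sub_zero, ne_eq, OfNat.ofNat_ne_zero, not_false_eq_true, zero_pow, mul_zero] at hφ10
  linarith

theorem norm_gradient_sq_le {L : ℝ} (hL : 0 < L) (hf : ∀ w, HasGradientAt f (f' w) w)
    (hlip : ∀ a b, ‖f' a - f' b‖ ≤ L * ‖a - b‖) {p : E} (hmin : ∀ w, f p ≤ f w) (w : E) :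
    ‖f' w‖ ^ 2 ≤ 2 * L * (f w - f p) := by
  -- Compare `f p` with the value after a gradient step of length `1 / L`.
  have hstep := le_add_inner_gradient_add_sq hf hlip w (w - L⁻¹ • f' w)
  rw [sub_sub_cancel_left, inner_neg_right, real_inner_smul_right, real_inner_self_eq_norm_sq,
    norm_neg, norm_smul, Real.norm_of_nonneg (inv_nonneg.2 hL.le)] at hstep
  have hmin_step := (hmin _).trans hstep
  field_simp at hmin_step
  nlinarith

theorem ConvexOn.abs_sub_le_mul_norm (hconv : ConvexOn ℝ univ f)
    (hf : ∀ w, HasGradientAt f (f' w) w) {G : ℝ} {x p : E} (hx : ‖f' x‖ ≤ G)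
    (hp : ‖f' p‖ ≤ G) : |f x - f p| ≤ G * ‖x - p‖ := by
  have hxp := hconv.add_inner_gradient_le hf x p
  have hpx := hconv.add_inner_gradient_le hf p x
  have h₁ := abs_le.1 (abs_real_inner_le_norm (f' x) (x - p))
  have h₂ := abs_le.1 (abs_real_inner_le_norm (f' p) (x - p))
  rw [← neg_sub, inner_neg_right] at hxp
  rw [abs_le]
  constructor <;> nlinarith [mul_le_mul_of_nonneg_right hx (norm_nonneg (x - p)),
    mul_le_mul_of_nonneg_right hp (norm_nonneg (x - p))]

theorem ConvexOn.tendsto_of_tendsto_infDist {ι : Type*} {l : Filter ι}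
    (hconv : ConvexOn ℝ univ f) (hf : ∀ w, HasGradientAt f (f' w) w) (hf'cont : Continuous f')
    {Y T : Set E} (hYcpt : IsCompact Y) (hT : IsCompact T) (hTne : T.Nonempty) (hTY : T ⊆ Y)
    {fT : ℝ} (hTf : ∀ p ∈ T, f p = fT) {x : ι → E} (hxY : ∀ i, x i ∈ Y)
    (hx : Tendsto (fun i => infDist (x i) T) l (𝓝 0)) : Tendsto (fun i => f (x i)) l (𝓝 fT) := by
  obtain ⟨G, hG⟩ := hYcpt.exists_bound_of_continuousOn hf'cont.continuousOn
  have hclose : ∀ i, ‖f (x i) - fT‖ ≤ G * infDist (x i) T := fun i => by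
    obtain ⟨p, hp, hxp⟩ := hT.exists_infDist_eq_dist hTne (x i)
    rw [hxp, dist_eq_norm, ← hTf p hp]
    exact hconv.abs_sub_le_mul_norm hf (hG _ (hxY i)) (hG _ (hTY hp))
  rw [tendsto_iff_norm_sub_tendsto_zero]
  exact squeeze_zero (fun i => norm_nonneg _) hclose (by simpa using hx.const_mul G)

variable {L μ s t : ℝ}

theorem norm_proj_gradStep_sub_sq_le (hYconv : Convex ℝ Y) (hprojY : ∀ z, proj z ∈ Y)
    (hprojnear : ∀ z, ∀ w ∈ Y, ‖z - proj z‖ ≤ ‖z - w‖) (hfconv : ConvexOn ℝ univ f)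
    (hgconv : ConvexOn ℝ univ g) (hf : ∀ w, HasGradientAt f (f' w) w)
    (hg : ∀ w, HasGradientAt g (g' w) w) (hL : 0 < L)
    (hglip : ∀ a b, ‖g' a - g' b‖ ≤ L * ‖a - b‖) (hμ : μ ∈ Icc (0 : ℝ) 1) (hs : 0 ≤ s)
    (ht : 0 ≤ t) {p : E} (hpY : p ∈ Y) (hpmin : ∀ w, g p ≤ g w) (x : E) :
    ‖proj (x - ((μ * s) • f' x + ((1 - μ) * t) • g' x)) - p‖ ^ 2 ≤ ‖x - p‖ ^ 2
      - 2 * μ * s * (f x - f p) - 2 * (1 - μ) * t * (1 - L * t) * (g x - g p)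
      + μ * s ^ 2 * ‖f' x‖ ^ 2 := by
  have hμ0 : 0 ≤ μ := hμ.1
  have h1μ : 0 ≤ 1 - μ := sub_nonneg.2 hμ.2
  have hproj : ‖proj (x - ((μ * s) • f' x + ((1 - μ) * t) • g' x)) - p‖ ^ 2
      ≤ ‖(x - p) - (μ • s • f' x + (1 - μ) • t • g' x)‖ ^ 2 := by
    rw [sub_right_comm, smul_smul, smul_smul]
    exact pow_le_pow_left₀ (norm_nonneg _) (norm_proj_sub_le hYconv hprojY hprojnear _ hpY) 2
  rw [norm_sub_sq_real (x - p), inner_add_right, real_inner_smul_right, real_inner_smul_right,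
    real_inner_smul_right, real_inner_smul_right] at hproj
  have hconv := norm_smul_add_one_sub_smul_sq_le hμ (s • f' x) (t • g' x)
  rw [norm_smul, norm_smul, mul_pow, mul_pow, Real.norm_of_nonneg hs,
    Real.norm_of_nonneg ht] at hconv
  have hfx := hfconv.add_inner_gradient_le hf x p
  have hgx := hgconv.add_inner_gradient_le hg x p
  rw [← neg_sub x p, inner_neg_right, real_inner_comm] at hfx hgx
  have hgrad := mul_le_mul_of_nonneg_left (norm_gradient_sq_le hL hg hglip hpmin x)
    (mul_nonneg h1μ (sq_nonneg t))
  linear_combination hproj + hconv + 2 * mul_le_mul_of_nonneg_left hfx (mul_nonneg hμ0 hs)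
    + 2 * mul_le_mul_of_nonneg_left hgx (mul_nonneg h1μ ht) + hgrad

theorem infDist_proj_gradStep_sq_le (hYconv : Convex ℝ Y) (hprojY : ∀ z, proj z ∈ Y)
    (hprojnear : ∀ z, ∀ w ∈ Y, ‖z - proj z‖ ≤ ‖z - w‖) (hfconv : ConvexOn ℝ univ f)
    (hgconv : ConvexOn ℝ univ g) (hf : ∀ w, HasGradientAt f (f' w) w)
    (hg : ∀ w, HasGradientAt g (g' w) w) (hL : 0 < L)
    (hglip : ∀ a b, ‖g' a - g' b‖ ≤ L * ‖a - b‖) (hμ : μ ∈ Icc (0 : ℝ) 1) (hs : 0 ≤ s)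
    (ht : 0 ≤ t) {T : Set E} (hT : IsCompact T) (hTne : T.Nonempty) (hTY : T ⊆ Y)
    {fT gmin : ℝ} (hTf : ∀ p ∈ T, f p = fT) (hTg : ∀ p ∈ T, g p = gmin) (hgmin : ∀ w, gmin ≤ g w)
    {c G : ℝ} (hc : c ≤ 2 * (1 - μ) * t * (1 - L * t)) {x : E} (hG : ‖f' x‖ ≤ G) :
    infDist (proj (x - ((μ * s) • f' x + ((1 - μ) * t) • g' x))) T ^ 2 ≤ infDist x T ^ 2
      - 2 * μ * s * (f x - fT) - c * (g x - gmin) + μ * s ^ 2 * G ^ 2 := by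
  obtain ⟨p, hp, hxp⟩ := hT.exists_infDist_eq_dist hTne x
  have hpmin : ∀ w, g p ≤ g w := fun w => hTg p hp ▸ hgmin w
  have hstep := norm_proj_gradStep_sub_sq_le hYconv hprojY hprojnear hfconv hgconv hf hg hL hglip
    hμ hs ht (hTY hp) hpmin x
  rw [hTf p hp, hTg p hp, ← dist_eq_norm x, ← hxp] at hstep
  have hnear : infDist (proj (x - ((μ * s) • f' x + ((1 - μ) * t) • g' x))) T ^ 2
      ≤ ‖proj (x - ((μ * s) • f' x + ((1 - μ) * t) • g' x)) - p‖ ^ 2 := by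
    rw [← dist_eq_norm]; exact pow_le_pow_left₀ infDist_nonneg (infDist_le_dist_of_mem hp) 2
  have hgx : 0 ≤ g x - gmin := sub_nonneg.2 (hgmin x)
  nlinarith [mul_le_mul_of_nonneg_right hc hgx, mul_le_mul_of_nonneg_left
    (pow_le_pow_left₀ (norm_nonneg _) hG 2) (mul_nonneg hμ.1 (sq_nonneg s))]

theorem tendsto_infDist_bilevelProjGrad (hYcpt : IsCompact Y) (hYconv : Convex ℝ Y)
    (hprojY : ∀ z, proj z ∈ Y) (hprojnear : ∀ z, ∀ w ∈ Y, ‖z - proj z‖ ≤ ‖z - w‖)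
    (hfconv : ConvexOn ℝ univ f) (hgconv : ConvexOn ℝ univ g)
    (hf : ∀ w, HasGradientAt f (f' w) w) (hg : ∀ w, HasGradientAt g (g' w) w)
    (hf'cont : Continuous f') (hL : 0 < L) (hglip : ∀ a b, ‖g' a - g' b‖ ≤ L * ‖a - b‖)
    (hμ : μ ∈ Ioo (0 : ℝ) 1) (hs : 0 < s) (ht : 0 < t) (hLt : L * t < 1) {α β : ℕ → ℝ}
    (hα : ∀ k, α k ∈ Ioc (0 : ℝ) 1) (hαto : Tendsto α atTop (𝓝 0))
    (hαdiv : Tendsto (fun n => ∑ k ∈ Finset.range n, α k) atTop atTop) {βlow : ℝ}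
    (hβlow : 0 < βlow) (hβ : ∀ k, β k ∈ Icc βlow 1) {T : Set E} (hT : IsCompact T)
    (hTne : T.Nonempty) (hTY : T ⊆ Y) {fT gmin : ℝ} (hTf : ∀ p ∈ T, f p = fT)
    (hTg : ∀ p ∈ T, g p = gmin) (hgmin : ∀ w, gmin ≤ g w)
    (hTmem : ∀ w ∈ Y, f w ≤ fT → g w ≤ gmin → w ∈ T) {y : ℕ → E} (hy0 : y 0 ∈ Y)
    (hyrec : ∀ k, y (k + 1) =
      proj (y k - ((μ * α k * s) • f' (y k) + ((1 - μ) * β k * t) • g' (y k)))) :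
    Tendsto (fun k => infDist (y k) T) atTop (𝓝 0) ∧
      Tendsto (fun k => f (y k)) atTop (𝓝 fT) := by
  have hyY : ∀ k, y k ∈ Y
    | 0 => hy0
    | k + 1 => hyrec k ▸ hprojY _
  have h1μ : 0 < 1 - μ := sub_pos.2 hμ.2
  have hfcont : Continuous f := continuous_iff_continuousAt.2 fun w => (hf w).continuousAt
  have hgcont : Continuous g := continuous_iff_continuousAt.2 fun w => (hg w).continuousAt
  obtain ⟨G, hG⟩ := hYcpt.exists_bound_of_continuousOn hf'cont.continuousOn
  obtain ⟨fmin, hfmin⟩ := (hYcpt.image hfcont).bddBelow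
  have hrec : ∀ k, infDist (y (k + 1)) T ^ 2 ≤ infDist (y k) T ^ 2
      - (2 * μ * s) * α k * (f (y k) - fT)
      - (2 * (1 - μ) * βlow * t * (1 - L * t)) * (g (y k) - gmin)
      + (μ * s ^ 2 * G ^ 2) * α k ^ 2 := fun k => by
    obtain ⟨hβk0, hβk1⟩ := hβ k
    have hβt : βlow * t * (1 - L * t) ≤ β k * t * (1 - L * (β k * t)) :=
      mul_le_mul (mul_le_mul_of_nonneg_right hβk0 ht.le)
        (by nlinarith [mul_le_mul_of_nonneg_left hβk1 (mul_pos hL ht).le]) (sub_pos.2 hLt).le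
        (mul_nonneg (hβlow.le.trans hβk0) ht.le)
    have hc := mul_le_mul_of_nonneg_left hβt (mul_nonneg zero_le_two h1μ.le)
    have hstep := infDist_proj_gradStep_sq_le (s := α k * s) (t := β k * t) hYconv hprojY
      hprojnear hfconv hgconv hf hg hL hglip (Ioo_subset_Icc_self hμ)
      (mul_nonneg (hα k).1.le hs.le) (mul_nonneg (hβlow.le.trans hβk0) ht.le) hT hTne hTY hTf hTg
      hgmin (c := 2 * (1 - μ) * βlow * t * (1 - L * t)) (by linear_combination hc) (hG _ (hyY k))
    rw [← mul_assoc, ← mul_assoc, ← hyrec] at hstep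
    linear_combination hstep
  have hgap : ∀ r > 0, ∃ δ > 0, ∀ k, r ≤ infDist (y k) T ^ 2 →
      δ ≤ max (f (y k) - fT) (g (y k) - gmin) := fun r hr => by
    obtain ⟨δ, hδ, hle⟩ := hYcpt.exists_pos_le_of_le
      (F := fun w => max (f w - fT) (g w - gmin)) (G := fun w => infDist w T ^ 2)
      ((hfcont.sub continuous_const).max (hgcont.sub continuous_const))
      ((continuous_infDist_pt T).pow 2) (fun w hwY hw => by
        rw [max_le_iff, sub_nonpos, sub_nonpos] at hw
        rw [infDist_zero_of_mem (hTmem w hwY hw.1 hw.2)]; norm_num) hr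
    exact ⟨δ, hδ, fun k => hle _ (hyY k)⟩
  have hD := tendsto_zero_of_lyapunov (mul_pos (mul_pos two_pos hμ.1) hs)
    (mul_pos (mul_pos (mul_pos (mul_pos two_pos h1μ) hβlow) ht) (sub_pos.2 hLt))
    (mul_nonneg (mul_nonneg hμ.1.le (sq_nonneg s)) (sq_nonneg G)) (fun k => sq_nonneg _) hα hαto
    hαdiv (fun k => show -(fT - fmin) ≤ f (y k) - fT by
      linarith [hfmin (mem_image_of_mem f (hyY k))])
    (fun k => sub_nonneg.2 (hgmin _)) hrec hgap
  have hdist : Tendsto (fun k => infDist (y k) T) atTop (𝓝 0) := by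
    simpa [Real.sqrt_sq infDist_nonneg] using hD.sqrt
  exact ⟨hdist, hfconv.tendsto_of_tendsto_infDist hf hf'cont hYcpt hT hTne hTY hTf hyY hdist⟩

end InnerProductSpace

theorem stmt5_general {m : ℕ}
    (Ψ ψ : EuclideanSpace ℝ (Fin m) → ℝ)
    (Ψ' ψ' : EuclideanSpace ℝ (Fin m) → EuclideanSpace ℝ (Fin m))
    (hΨconv : ConvexOn ℝ univ Ψ) (hψconv : ConvexOn ℝ univ ψ)
    (hΨgrad : ∀ w, HasGradientAt Ψ (Ψ' w) w) (hψgrad : ∀ w, HasGradientAt ψ (ψ' w) w)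
    (LF Lf : ℝ)
    (hΨlip : ∀ a b, ‖Ψ' a - Ψ' b‖ ≤ LF * ‖a - b‖)
    (hψlip : ∀ a b, ‖ψ' a - ψ' b‖ ≤ Lf * ‖a - b‖)
    (Y : Set (EuclideanSpace ℝ (Fin m)))
    (hYcpt : IsCompact Y) (hYconv : Convex ℝ Y)
    (su sl μ : ℝ)
    (hsu : su ∈ Ioo 0 (1 / LF)) (hsl : sl ∈ Ioo 0 (1 / Lf)) (hμ : μ ∈ Ioo (0 : ℝ) 1)
    (α : ℕ → ℝ) (hα : ∀ k, α k ∈ Ioc (0 : ℝ) 1)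
    (hαto : Tendsto α atTop (𝓝 0))
    (hαdiv : Tendsto (fun N => ∑ k ∈ Finset.range N, α k) atTop atTop)
    (βlow : ℝ) (hβlow : 0 < βlow)
    (β : ℕ → ℝ) (hβ : ∀ k, β k ∈ Icc βlow 1)
    (proj : EuclideanSpace ℝ (Fin m) → EuclideanSpace ℝ (Fin m))
    (hprojY : ∀ z, proj z ∈ Y)
    (hprojnear : ∀ z, ∀ w ∈ Y, ‖z - proj z‖ ≤ ‖z - w‖)
    (y : ℕ → EuclideanSpace ℝ (Fin m)) (hy0 : y 0 ∈ Y)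
    (hyrec : ∀ k, y (k + 1) =
      proj (y k - ((μ * α k * su) • Ψ' (y k) + ((1 - μ) * β k * sl) • ψ' (y k))))
    (S : Set (EuclideanSpace ℝ (Fin m)))
    (hS : S = {w : EuclideanSpace ℝ (Fin m) | ∀ w', ψ w ≤ ψ w'})
    (Ψstar : ℝ) (hΨstar : Ψstar = sInf (Ψ '' (Y ∩ S)))
    (Shat : Set (EuclideanSpace ℝ (Fin m)))
    (hShat : Shat = {w ∈ Y ∩ S | Ψ w = Ψstar})
    (hShatne : Shat.Nonempty) :
    Tendsto (fun k => infDist (y k) Shat) atTop (𝓝 0) ∧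
    Tendsto (fun k => Ψ (y k)) atTop (𝓝 Ψstar) := by
  obtain ⟨p₀, hp₀⟩ := hShatne
  subst hS hShat
  set Shat := {w | w ∈ Y ∩ {w | ∀ w', ψ w ≤ ψ w'} ∧ Ψ w = Ψstar}
  have hΨcont : Continuous Ψ := continuous_iff_continuousAt.2 fun w => (hΨgrad w).continuousAt
  have hψcont : Continuous ψ := continuous_iff_continuousAt.2 fun w => (hψgrad w).continuousAt
  have hShatY : Shat ⊆ Y := fun w hw => hw.1.1
  have hShatcpt : IsCompact Shat := by
    refine hYcpt.of_isClosed_subset ?_ hShatY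
    have hS : IsClosed {w | ∀ w', ψ w ≤ ψ w'} := by
      simpa only [ofPred_forall] using isClosed_iInter fun w' => isClosed_le hψcont continuous_const
    exact (hYcpt.isClosed.inter hS).inter (isClosed_eq hΨcont continuous_const)
  have hShatmem : ∀ w ∈ Y, Ψ w ≤ Ψstar → ψ w ≤ ψ p₀ → w ∈ Shat := fun w hwY hΨw hψw => by
    have hwS : ∀ w', ψ w ≤ ψ w' := fun w' => hψw.trans (hp₀.1.2 w')
    refine ⟨⟨hwY, hwS⟩, hΨw.antisymm ?_⟩
    exact hΨstar ▸ csInf_le ((hYcpt.image hΨcont).bddBelow.mono (image_mono inter_subset_left))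
      (mem_image_of_mem Ψ ⟨hwY, hwS⟩)
  have hLf : 0 < Lf := one_div_pos.1 (hsl.1.trans hsl.2)
  have hΨ'cont : Continuous Ψ' := (LipschitzWith.of_dist_le_mul fun a b => by
    simpa only [dist_eq_norm] using (hΨlip a b).trans
      (mul_le_mul_of_nonneg_right (Real.le_coe_toNNReal LF) (norm_nonneg _))).continuous
  exact tendsto_infDist_bilevelProjGrad hYcpt hYconv hprojY hprojnear hΨconv hψconv hΨgrad
    hψgrad hΨ'cont hLf hψlip hμ hsu.1 hsl.1 (mul_comm Lf sl ▸ (lt_div_iff₀ hLf).1 hsl.2) hα hαto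
    hαdiv hβlow hβ hShatcpt ⟨p₀, hp₀⟩ hShatY (fun p hp => hp.2)
    (fun p hp => le_antisymm (hp.1.2 p₀) (hp₀.1.2 p)) hp₀.1.2 hShatmem hy0 hyrec

theorem stmt5 {m : ℕ}
    (Ψ ψ : EuclideanSpace ℝ (Fin m) → ℝ)
    (Ψ' ψ' : EuclideanSpace ℝ (Fin m) → EuclideanSpace ℝ (Fin m))
    (hΨconv : ConvexOn ℝ univ Ψ) (hψconv : ConvexOn ℝ univ ψ)
    (hΨgrad : ∀ w, HasGradientAt Ψ (Ψ' w) w) (hψgrad : ∀ w, HasGradientAt ψ (ψ' w) w)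
    (LF Lf : ℝ)
    (hΨlip : ∀ a b, ‖Ψ' a - Ψ' b‖ ≤ LF * ‖a - b‖)
    (hψlip : ∀ a b, ‖ψ' a - ψ' b‖ ≤ Lf * ‖a - b‖)
    (Y : Set (EuclideanSpace ℝ (Fin m)))
    (hYne : Y.Nonempty) (hYcpt : IsCompact Y) (hYconv : Convex ℝ Y)
    (su sl μ : ℝ)
    (hsu : su ∈ Ioo 0 (1 / LF)) (hsl : sl ∈ Ioo 0 (1 / Lf)) (hμ : μ ∈ Ioo (0 : ℝ) 1)
    (α : ℕ → ℝ) (hα : ∀ k, α k ∈ Ioc (0 : ℝ) 1) (hαanti : Antitone α)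
    (hαto : Tendsto α atTop (𝓝 0))
    (hαdiv : Tendsto (fun N => ∑ k ∈ Finset.range N, α k) atTop atTop)
    (βlow : ℝ) (hβlow : 0 < βlow)
    (β : ℕ → ℝ) (hβ : ∀ k, β k ∈ Icc βlow 1)
    (proj : EuclideanSpace ℝ (Fin m) → EuclideanSpace ℝ (Fin m))
    (hprojY : ∀ z, proj z ∈ Y)
    (hprojnear : ∀ z, ∀ w ∈ Y, ‖z - proj z‖ ≤ ‖z - w‖)
    (y : ℕ → EuclideanSpace ℝ (Fin m)) (hy0 : y 0 ∈ Y)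
    (hyrec : ∀ k, y (k + 1) =
      proj (y k - ((μ * α k * su) • Ψ' (y k) + ((1 - μ) * β k * sl) • ψ' (y k))))
    (S : Set (EuclideanSpace ℝ (Fin m)))
    (hS : S = {w : EuclideanSpace ℝ (Fin m) | ∀ w', ψ w ≤ ψ w'})
    (Ψstar : ℝ) (hΨstar : Ψstar = sInf (Ψ '' (Y ∩ S)))
    (Shat : Set (EuclideanSpace ℝ (Fin m)))
    (hShat : Shat = {w ∈ Y ∩ S | Ψ w = Ψstar})
    (hShatne : Shat.Nonempty) :
    Tendsto (fun k => infDist (y k) Shat) atTop (𝓝 0) ∧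
    Tendsto (fun k => Ψ (y k)) atTop (𝓝 Ψstar) :=
  stmt5_general Ψ ψ Ψ' ψ' hΨconv hψconv hΨgrad hψgrad LF Lf hΨlip hψlip Y hYcpt hYconv su sl μ hsu
    hsl hμ α hα hαto hαdiv βlow hβlow β hβ proj hprojY hprojnear y hy0 hyrec S hS Ψstar hΨstar Shat
    hShat hShatne
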